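/- arXiv:2601.18992 — 2 statements merged into one kernel-verified Lean document; each statement's English description precedes it below -/
import Mathlib

section
/- The variance of the mixture-target/mixture-proposal estimator is at most that of the individual-target/mixture-proposal estimator: Var[MM(g)] ≤ Var[IM(g)] (both sides allowed to be infinite). Equivalently, writing I_i := ∫ p_i·g dx and I := (1/N)·Σ_i I_i, one has ∫ ( (1/N)·Σ_{i=1}^N (p_i·g/q_mix − I_i) )²·q_mix dx ≤ (1/N)·Σ_{i=1}^N ∫ (p_i·g/q_mix − I_i)²·q_mix dx, which yields Var[MM(g)] ≤ Var[IM(g)]. -/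
/-!
With `fᵢ := pᵢ g / q_mix` and `F := p_mix g / q_mix = N⁻¹ ∑ᵢ fᵢ`, independence gives
`N² Var[MM(g)] = N Var(F)` and `N² Var[IM(g)] = ∑ᵢ Var(fᵢ)` (variances under `q_mix`),
and `N Var(F) ≤ ∑ᵢ Var(fᵢ)` follows pointwise from Cauchy–Schwarz `N (N⁻¹ ∑ᵢ xᵢ)² ≤ ∑ᵢ xᵢ²`
applied to the centred `fᵢ`. Infinite variances need additivity of `eVar` over independent
summands also outside `L²`: if `X ⟂ Y` and `X + Y ∈ Lᵖ`, Fubini over the product law gives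
`x + Y ∈ Lᵖ` for some `x`.
-/

open MeasureTheory ProbabilityTheory Finset
open scoped ENNReal

namespace ProbabilityTheory

variable {Ω E : Type*} [MeasurableSpace Ω] {μ : Measure Ω} [IsProbabilityMeasure μ]
  [NormedAddCommGroup E] [MeasurableSpace E] [BorelSpace E] [SecondCountableTopology E]
  {X Y : Ω → E} {p : ℝ≥0∞}

theorem IndepFun.memLp_right_of_memLp_add (hXY : X ⟂ᵢ[μ] Y) (hX : Measurable X)
    (hY : Measurable Y) (hp0 : p ≠ 0) (hp_top : p ≠ ∞) (hsum : MemLp (X + Y) p μ) :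
    MemLp Y p μ := by
  have hadd : Measurable fun z : E × E => z.1 + z.2 := measurable_fst.add measurable_snd
  have hprod : MemLp (fun z : E × E => z.1 + z.2) p ((μ.map X).prod (μ.map Y)) := by
    rw [← (indepFun_iff_map_prod_eq_prod_map_map hX.aemeasurable hY.aemeasurable).1 hXY,
      memLp_map_measure_iff hadd.aestronglyMeasurable (hX.prodMk hY).aemeasurable]
    exact hsum
  have := Measure.isProbabilityMeasure_map (μ := μ) hX.aemeasurable
  obtain ⟨x, hx⟩ := ((integrable_norm_rpow_iff hadd.aestronglyMeasurable hp0 hp_top).2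
    hprod).prod_right_ae.exists
  have hshift : MemLp (fun y => x + y) p (μ.map Y) :=
    (integrable_norm_rpow_iff (by fun_prop) hp0 hp_top).1 hx
  have hid : MemLp id p (μ.map Y) := by
    convert hshift.sub (memLp_const x) using 1
    ext y
    simp
  exact (memLp_map_measure_iff aestronglyMeasurable_id hY.aemeasurable).1 hid

theorem IndepFun.evariance_add {X Y : Ω → ℝ} (hXY : X ⟂ᵢ[μ] Y) (hX : Measurable X)
    (hY : Measurable Y) : eVar[X + Y; μ] = eVar[X; μ] + eVar[Y; μ] := by
  by_cases hL2 : MemLp X 2 μ ∧ MemLp Y 2 μ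
  · obtain ⟨hX2, hY2⟩ := hL2
    rw [← hX2.ofReal_variance_eq, ← hY2.ofReal_variance_eq, ← (hX2.add hY2).ofReal_variance_eq,
      hXY.variance_add hX2 hY2, ENNReal.ofReal_add (variance_nonneg _ _) (variance_nonneg _ _)]
  · have hsum : ¬MemLp (X + Y) 2 μ := fun h => hL2
      ⟨hXY.symm.memLp_right_of_memLp_add hY hX two_ne_zero ENNReal.ofNat_ne_top
          (add_comm X Y ▸ h),
        hXY.memLp_right_of_memLp_add hX hY two_ne_zero ENNReal.ofNat_ne_top h⟩
    rw [evariance_eq_top (hX.add hY).aestronglyMeasurable hsum]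
    rcases not_and_or.1 hL2 with h | h
    · rw [evariance_eq_top hX.aestronglyMeasurable h, top_add]
    · rw [evariance_eq_top hY.aestronglyMeasurable h, add_top]

theorem iIndepFun.evariance_sum {ι : Type*} {Z : ι → Ω → ℝ} (hZ : iIndepFun Z μ)
    (hm : ∀ i, Measurable (Z i)) (s : Finset ι) :
    eVar[fun ω => ∑ i ∈ s, Z i ω; μ] = ∑ i ∈ s, eVar[Z i; μ] := by
  classical
  rw [← Finset.sum_fn]
  induction s using Finset.induction_on with
  | empty => simp
  | insert j s hj ih =>
    have hsm : Measurable (∑ i ∈ s, Z i) := Finset.sum_fn s Z ▸ s.measurable_sum fun i _ => hm i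
    rw [sum_insert hj, sum_insert hj, add_comm (Z j),
      (hZ.indepFun_finsetSum_of_notMem hm hj).evariance_add hsm (hm j), ih, add_comm]

theorem iIndepFun.evariance_sum_comp_of_map_eq {ι E : Type*} [MeasurableSpace E]
    {Y : ι → Ω → E} (hY : iIndepFun Y μ) (hYm : ∀ i, Measurable (Y i)) {ν : Measure E}
    (hlaw : ∀ i, μ.map (Y i) = ν) {φ : ι → E → ℝ} (hφ : ∀ i, Measurable (φ i))
    (s : Finset ι) :
    eVar[fun ω => ∑ i ∈ s, φ i (Y i ω); μ] = ∑ i ∈ s, eVar[φ i; ν] := by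
  refine ((hY.comp φ hφ).evariance_sum (fun i => (hφ i).comp (hYm i)) s).trans
    (sum_congr rfl fun i _ => ?_)
  have hident : IdentDistrib (Y i) id μ ν :=
    ⟨(hYm i).aemeasurable, aemeasurable_id, by rw [hlaw i, Measure.map_id]⟩
  exact (hident.comp (hφ i)).evariance_eq

end ProbabilityTheory

theorem card_mul_sq_mean_le_sum_sq {ι : Type*} (s : Finset ι) (x : ι → ℝ) :
    (#s : ℝ) * ((#s : ℝ)⁻¹ * ∑ i ∈ s, x i) ^ 2 ≤ ∑ i ∈ s, x i ^ 2 := by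
  obtain rfl | hs := s.eq_empty_or_nonempty
  · simp
  calc (#s : ℝ) * ((#s : ℝ)⁻¹ * ∑ i ∈ s, x i) ^ 2
      ≤ #s * ((∑ i ∈ s, x i ^ 2) / #s) := by
        rw [inv_mul_eq_div]
        gcongr
        exact sum_div_card_sq_le_sum_sq_div_card
    _ = ∑ i ∈ s, x i ^ 2 := mul_div_cancel₀ _ (by simp [hs.ne_empty])

theorem card_mul_evariance_mean_le {Ω ι : Type*} [MeasurableSpace Ω] {μ : Measure Ω}
    [IsFiniteMeasure μ] (s : Finset ι) {f : ι → Ω → ℝ}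
    (hf : ∀ i ∈ s, AEStronglyMeasurable (f i) μ) :
    #s * eVar[fun ω => (#s : ℝ)⁻¹ * ∑ i ∈ s, f i ω; μ] ≤ ∑ i ∈ s, eVar[f i; μ] := by
  by_cases hL2 : ∀ i ∈ s, MemLp (f i) 2 μ
  · have hmean : μ[fun ω => (#s : ℝ)⁻¹ * ∑ i ∈ s, f i ω] = (#s : ℝ)⁻¹ * ∑ i ∈ s, μ[f i] := by
      rw [integral_const_mul,
        integral_finsetSum _ fun i hi => (hL2 i hi).integrable one_le_two]
    simp only [evariance_eq_lintegral_ofReal, hmean]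
    rw [← lintegral_const_mul' _ _ (ENNReal.natCast_ne_top _),
      ← lintegral_finsetSum' _ fun i hi => ((hf i hi).aemeasurable.sub_const _).pow_const 2
        |>.ennreal_ofReal]
    refine lintegral_mono fun ω => ?_
    rw [← mul_sub, ← sum_sub_distrib, ← ENNReal.ofReal_natCast,
      ← ENNReal.ofReal_mul (by positivity), ← ENNReal.ofReal_sum_of_nonneg fun i _ => sq_nonneg _]
    exact ENNReal.ofReal_le_ofReal (card_mul_sq_mean_le_sum_sq s _)
  · obtain ⟨j, hj, hjL2⟩ := not_forall₂.1 hL2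
    exact le_top.trans_eq (ENNReal.sum_eq_top.2 ⟨j, hj, evariance_eq_top (hf j hj) hjL2⟩).symm

theorem variance_MM_le_variance_IM_general
    {d N : ℕ} (hN : 1 ≤ N)
    {Ω : Type} [MeasurableSpace Ω] (μ : Measure Ω) [IsProbabilityMeasure μ]
    (p q : Fin N → (Fin d → ℝ) → ℝ)
    (hpm : ∀ i, Measurable (p i)) (hqm : ∀ i, Measurable (q i))
    (pmix qmix : (Fin d → ℝ) → ℝ)
    (hpmix : ∀ x, pmix x = (N : ℝ)⁻¹ * ∑ i, p i x)
    (hqmix : ∀ x, qmix x = (N : ℝ)⁻¹ * ∑ i, q i x)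
    (g : (Fin d → ℝ) → ℝ) (hgm : Measurable g)
    -- Y_i i.i.d. with density q_mix
    (Y : Fin N → Ω → (Fin d → ℝ))
    (hYm : ∀ i, Measurable (Y i))
    (hYindep : iIndepFun Y μ)
    (hYlaw : ∀ i, Measure.map (Y i) μ =
      volume.withDensity (fun x => ENNReal.ofReal (qmix x))) :
    -- Var[MM(g)] ≤ Var[IM(g)]
    evariance (fun ω => (N : ℝ)⁻¹ * ∑ i, (pmix (Y i ω) / qmix (Y i ω)) * g (Y i ω)) μ
      ≤ evariance (fun ω => (N : ℝ)⁻¹ * ∑ i, (p i (Y i ω) / qmix (Y i ω)) * g (Y i ω)) μ := by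
  set ν := volume.withDensity fun x => ENNReal.ofReal (qmix x)
  have : IsProbabilityMeasure ν :=
    hYlaw ⟨0, hN⟩ ▸ Measure.isProbabilityMeasure_map (hYm _).aemeasurable
  set f : Fin N → (Fin d → ℝ) → ℝ := fun i x => p i x / qmix x * g x
  have hqmixm : Measurable qmix := by
    rw [funext hqmix]
    fun_prop
  have hfm : ∀ i, Measurable (f i) := fun i => ((hpm i).div hqmixm).mul hgm
  have hF : (fun x => pmix x / qmix x * g x) = fun x => (N : ℝ)⁻¹ * ∑ i, f i x := by
    ext x
    simp only [f, hpmix, sum_mul, sum_div, mul_sum, mul_div_assoc, mul_assoc]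
  have hFm : Measurable fun x => pmix x / qmix x * g x := hF ▸ by fun_prop
  rw [evariance_mul, evariance_mul,
    hYindep.evariance_sum_comp_of_map_eq hYm hYlaw (φ := fun _ x => pmix x / qmix x * g x)
      (fun _ => hFm),
    hYindep.evariance_sum_comp_of_map_eq hYm hYlaw hfm]
  gcongr ENNReal.ofReal _ * ?_
  calc ∑ _ : Fin N, eVar[fun x => pmix x / qmix x * g x; ν]
      = N * eVar[fun x => pmix x / qmix x * g x; ν] := by simp
    _ ≤ ∑ i, eVar[f i; ν] := by
      simpa [hF] using card_mul_evariance_mean_le univ fun i _ => (hfm i).aestronglyMeasurable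

/-- `Var[MM(g)] ≤ Var[IM(g)]` (both sides allowed to be
infinite, i.e. taken as `evariance` with values in `[0,∞]`), where both
estimators use i.i.d. samples `Y_1, …, Y_N` from the mixture proposal `q_mix`. -/
theorem variance_MM_le_variance_IM
    {d N : ℕ} (hN : 1 ≤ N)
    {Ω : Type} [MeasurableSpace Ω] (μ : Measure Ω) [IsProbabilityMeasure μ]
    (p q : Fin N → (Fin d → ℝ) → ℝ)
    (hp0 : ∀ i x, 0 ≤ p i x) (hq0 : ∀ i x, 0 ≤ q i x)
    (hpm : ∀ i, Measurable (p i)) (hqm : ∀ i, Measurable (q i))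
    (hp1 : ∀ i, ∫ x, p i x = 1) (hq1 : ∀ i, ∫ x, q i x = 1)
    (pmix qmix : (Fin d → ℝ) → ℝ)
    (hpmix : ∀ x, pmix x = (N : ℝ)⁻¹ * ∑ i, p i x)
    (hqmix : ∀ x, qmix x = (N : ℝ)⁻¹ * ∑ i, q i x)
    -- absolute continuity p_mix ≪ q_i
    (habs : ∀ i, ∀ᵐ x : Fin d → ℝ ∂volume, q i x = 0 → pmix x = 0)
    (g : (Fin d → ℝ) → ℝ) (hgm : Measurable g)
    -- ∫ p_mix · g² dx < ∞
    (hgL2 : Integrable (fun x => pmix x * (g x) ^ 2) volume)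
    -- Y_i i.i.d. with density q_mix
    (Y : Fin N → Ω → (Fin d → ℝ))
    (hYm : ∀ i, Measurable (Y i))
    (hYindep : iIndepFun Y μ)
    (hYlaw : ∀ i, Measure.map (Y i) μ =
      volume.withDensity (fun x => ENNReal.ofReal (qmix x))) :
    -- Var[MM(g)] ≤ Var[IM(g)]
    evariance (fun ω => (N : ℝ)⁻¹ * ∑ i, (pmix (Y i ω) / qmix (Y i ω)) * g (Y i ω)) μ
      ≤ evariance (fun ω => (N : ℝ)⁻¹ * ∑ i, (p i (Y i ω) / qmix (Y i ω)) * g (Y i ω)) μ :=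
  variance_MM_le_variance_IM_general hN μ p q hpm hqm pmix qmix hpmix hqmix g hgm Y hYm hYindep
    hYlaw
end

section
/- Determinant product inequality: with the notation of the context, if Q_t − Q is positive semidefinite, then det Σ_t · det S ≤ det Q_t · det R. -/
/-!
The covariance `Σ_t` is the Joseph form `(I - K H) P (I - K H)ᵀ + K R Kᵀ` with the gain `K_t`
evaluated at `P = Q`. It is monotone in `P` for the Loewner order, and at `P = Q_t`, where `K_t`
is the optimal gain, it collapses to the Schur complement `Q_t - K_t H Q_t` of `S_t` in the
block matrix `[[Q_t, Q_t Hᵀ], [H Q_t, S_t]]`. Expanding the determinant of that block matrix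
around either diagonal block gives `det (Q_t - K_t H Q_t) · det S_t = det Q_t · det R`.
Since also `S ≤ S_t`, monotonicity of the determinant on positive semidefinite matrices gives
`det Σ_t · det S ≤ det (Q_t - K_t H Q_t) · det S_t`.
-/

open Matrix
open scoped MatrixOrder ComplexOrder

namespace Matrix

section DetMono

variable {𝕜 n : Type*} [RCLike 𝕜] [Fintype n] [DecidableEq n]

lemma one_le_det_of_one_le {A : Matrix n n 𝕜} (hA : 1 ≤ A) : 1 ≤ A.det := by
  have hH : A.IsHermitian := by simpa using isHermitian_one.add (le_iff.mp hA).1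
  have heig (i : n) : 1 ≤ hH.eigenvalues i := by
    have h : (hH.eigenvalues i - 1) + 1 ∈ spectrum ℝ (algebraMap ℝ _ 1 + (A - 1)) := by
      simpa using hH.eigenvalues_mem_spectrum_real i
    linarith [spectrum_nonneg_of_nonneg (sub_nonneg.mpr hA) (spectrum.add_mem_add_iff.mp h)]
  rw [hH.det_eq_prod_eigenvalues, ← RCLike.ofReal_prod]
  exact_mod_cast Finset.one_le_prod fun i _ => heig i

lemma PosSemidef.det_le_det {A B : Matrix n n 𝕜} (hA : A.PosSemidef) (hAB : A ≤ B) :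
    A.det ≤ B.det := by
  by_cases hdet : A.det = 0
  · simpa [hdet] using (hA.nonneg.trans hAB).posSemidef.det_nonneg
  set T := CFC.sqrt A
  have hTT : T * T = A := CFC.sqrt_mul_sqrt_self A hA.nonneg
  have hT : IsUnit T.det :=
    isUnit_iff_ne_zero.mpr fun h => hdet (by rw [← hTT, det_mul, h, zero_mul])
  have hTinv : IsSelfAdjoint T⁻¹ := (CFC.sqrt_nonneg A).posSemidef.isHermitian.inv
  have hOneLe : 1 ≤ T⁻¹ * B * T⁻¹ := by
    simpa [← hTT, Matrix.mul_assoc, mul_nonsing_inv _ hT, nonsing_inv_mul _ hT] using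
      hTinv.conjugate_le_conjugate hAB
  have hB : B = T * (T⁻¹ * B * T⁻¹) * T := by
    simp [Matrix.mul_assoc, nonsing_inv_mul _ hT, mul_nonsing_inv_cancel_left _ _ hT]
  calc A.det = A.det * 1 := (mul_one _).symm
    _ ≤ A.det * (T⁻¹ * B * T⁻¹).det :=
      mul_le_mul_of_nonneg_left (one_le_det_of_one_le hOneLe) hA.det_nonneg
    _ = B.det := by
      rw [← hTT]
      conv_rhs => rw [hB]
      simp only [det_mul]
      ring

end DetMono

section RealConjugation

variable {m n : Type*} [Fintype m] [Fintype n]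

lemma PosSemidef.mul_mul_transpose_same {A : Matrix n n ℝ} (hA : A.PosSemidef)
    (B : Matrix m n ℝ) : (B * A * Bᵀ).PosSemidef := by
  simpa using hA.mul_mul_conjTranspose_same B

lemma mul_mul_transpose_le_mul_mul_transpose {A A' : Matrix n n ℝ} (h : A ≤ A')
    (B : Matrix m n ℝ) : B * A * Bᵀ ≤ B * A' * Bᵀ := by
  rw [le_iff, ← Matrix.sub_mul, ← Matrix.mul_sub]
  exact (le_iff.mp h).mul_mul_transpose_same B

end RealConjugation

section Kalman

variable {ι κ α : Type*} [Fintype ι] [Fintype κ] [DecidableEq κ] [CommRing α]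
  (H : Matrix κ ι α) (R : Matrix κ κ α)

noncomputable def kalmanGain (P : Matrix ι ι α) : Matrix ι κ α :=
  P * Hᵀ * (H * P * Hᵀ + R)⁻¹

def josephCov [DecidableEq ι] (K : Matrix ι κ α) (P : Matrix ι ι α) : Matrix ι ι α :=
  (1 - K * H) * P * (1 - K * H)ᵀ + K * R * Kᵀ

variable {H R} {P : Matrix ι ι α}

lemma kalmanGain_mul (hS : IsUnit (H * P * Hᵀ + R).det) :
    kalmanGain H R P * (H * P * Hᵀ + R) = P * Hᵀ := by
  rw [kalmanGain, Matrix.mul_assoc, nonsing_inv_mul _ hS, Matrix.mul_one]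

lemma josephCov_kalmanGain [DecidableEq ι] (hS : IsUnit (H * P * Hᵀ + R).det) :
    josephCov H R (kalmanGain H R P) P = P - kalmanGain H R P * H * P := by
  set K := kalmanGain H R P
  have hExpand :
      josephCov H R K P = P - K * H * P - P * Hᵀ * Kᵀ + K * (H * P * Hᵀ + R) * Kᵀ := by
    simp only [josephCov, transpose_sub, transpose_one, transpose_mul, Matrix.sub_mul,
      Matrix.mul_sub, Matrix.add_mul, Matrix.mul_add, Matrix.one_mul, Matrix.mul_one,
      Matrix.mul_assoc]
    abel
  rw [hExpand, kalmanGain_mul hS]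
  abel

lemma det_sub_kalmanGain_mul_mul_det [DecidableEq ι] (hP : IsUnit P.det)
    (hS : IsUnit (H * P * Hᵀ + R).det) :
    (P - kalmanGain H R P * H * P).det * (H * P * Hᵀ + R).det = P.det * R.det := by
  have := P.invertibleOfIsUnitDet hP
  have := (H * P * Hᵀ + R).invertibleOfIsUnitDet hS
  have hSchurS := det_fromBlocks₂₂ P (P * Hᵀ) (H * P) (H * P * Hᵀ + R)
  have hSchurP := det_fromBlocks₁₁ P (P * Hᵀ) (H * P) (H * P * Hᵀ + R)
  rw [invOf_eq_nonsing_inv] at hSchurS hSchurP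
  rw [mul_nonsing_inv_cancel_right _ _ hP, ← Matrix.mul_assoc, add_sub_cancel_left] at hSchurP
  rw [mul_comm, kalmanGain, Matrix.mul_assoc _ H, ← hSchurS, hSchurP]

end Kalman

lemma josephCov_posSemidef {ι κ : Type*} [Fintype ι] [Fintype κ] [DecidableEq ι]
    {H : Matrix κ ι ℝ} {R : Matrix κ κ ℝ} {P : Matrix ι ι ℝ} (K : Matrix ι κ ℝ)
    (hP : P.PosSemidef) (hR : R.PosSemidef) : (josephCov H R K P).PosSemidef :=
  (hP.mul_mul_transpose_same _).add (hR.mul_mul_transpose_same K)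

end Matrix

theorem determinant_product_inequality_general
    {d m : ℕ}
    (H : Matrix (Fin m) (Fin d) ℝ)
    (Q Qt : Matrix (Fin d) (Fin d) ℝ) (R : Matrix (Fin m) (Fin m) ℝ)
    (hQ : Q.PosDef) (hQt : Qt.PosDef) (hR : R.PosDef)
    (S St : Matrix (Fin m) (Fin m) ℝ)
    (hS : S = H * Q * Hᵀ + R) (hSt : St = H * Qt * Hᵀ + R)
    (Kt : Matrix (Fin d) (Fin m) ℝ) (hKt : Kt = Qt * Hᵀ * St⁻¹)
    (Sigt : Matrix (Fin d) (Fin d) ℝ)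
    (hSigt : Sigt = (1 - Kt * H) * Q * (1 - Kt * H)ᵀ + Kt * R * Ktᵀ)
    (hQtQ : (Qt - Q).PosSemidef) :
    Sigt.det * S.det ≤ Qt.det * R.det := by
  subst hSigt hKt hS hSt
  set K := kalmanGain H R Qt
  have hStUnit : IsUnit (H * Qt * Hᵀ + R).det :=
    (PosDef.posSemidef_add (hQt.posSemidef.mul_mul_transpose_same H) hR).det_pos.ne'.isUnit
  have hSPsd : (H * Q * Hᵀ + R).PosSemidef :=
    (hQ.posSemidef.mul_mul_transpose_same H).add hR.posSemidef
  have hSigPsd : (josephCov H R K Q).PosSemidef :=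
    josephCov_posSemidef K hQ.posSemidef hR.posSemidef
  have hSigLe : (josephCov H R K Q).det ≤ (josephCov H R K Qt).det :=
    hSigPsd.det_le_det (add_le_add_left (mul_mul_transpose_le_mul_mul_transpose hQtQ _) _)
  have hSLe : (H * Q * Hᵀ + R).det ≤ (H * Qt * Hᵀ + R).det :=
    hSPsd.det_le_det (add_le_add_left (mul_mul_transpose_le_mul_mul_transpose hQtQ H) R)
  calc (josephCov H R K Q).det * (H * Q * Hᵀ + R).det
      ≤ (josephCov H R K Qt).det * (H * Qt * Hᵀ + R).det :=
        mul_le_mul hSigLe hSLe hSPsd.det_nonneg (hSigPsd.det_nonneg.trans hSigLe)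
    _ = Qt.det * R.det := by
      rw [josephCov_kalmanGain hStUnit,
        det_sub_kalmanGain_mul_mul_det hQt.det_pos.ne'.isUnit hStUnit]

/-- Determinant product inequality: with `S = H·Q·Hᵀ + R`,
`S_t = H·Q_t·Hᵀ + R`, `K_t = Q_t·Hᵀ·S_t⁻¹` and
`Σ_t = (I − K_t·H)·Q·(I − K_t·H)ᵀ + K_t·R·K_tᵀ`, if `Q_t − Q` is positive
semidefinite then `det Σ_t · det S ≤ det Q_t · det R`. -/
theorem determinant_product_inequality
    {d m : ℕ} (hd : 1 ≤ d) (hm : 1 ≤ m)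
    (H : Matrix (Fin m) (Fin d) ℝ)
    (Q Qt : Matrix (Fin d) (Fin d) ℝ) (R : Matrix (Fin m) (Fin m) ℝ)
    (hQ : Q.PosDef) (hQt : Qt.PosDef) (hR : R.PosDef)
    (S St : Matrix (Fin m) (Fin m) ℝ)
    (hS : S = H * Q * Hᵀ + R) (hSt : St = H * Qt * Hᵀ + R)
    (Kt : Matrix (Fin d) (Fin m) ℝ) (hKt : Kt = Qt * Hᵀ * St⁻¹)
    (Sigt : Matrix (Fin d) (Fin d) ℝ)
    (hSigt : Sigt = (1 - Kt * H) * Q * (1 - Kt * H)ᵀ + Kt * R * Ktᵀ)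
    (hQtQ : (Qt - Q).PosSemidef) :
    Sigt.det * S.det ≤ Qt.det * R.det :=
  determinant_product_inequality_general H Q Qt R hQ hQt hR S St hS hSt Kt hKt Sigt hSigt hQtQ
end
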